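/- (k = 4, NO case) Assume every four vectors v_1,v_2,v_3,v_4 ∈ S (repetitions allowed) have a common coordinate x ∈ [d] with v_1[x] = v_2[x] = v_3[x] = v_4[x] = 1. Then the diameter of the graph H is at most 4, i.e., d(α,β) ≤ 4 for every ordered pair of vertices α, β of H. -/
import Mathlib


namespace DiamK4

/-! ## Generic directed-graph notions -/

/-- There is a directed walk of length `n` from `a` to `b`. -/
def HasWalkLen {V : Type*} (Adj : V → V → Prop) : ℕ → V → V → Prop
  | 0, a, b => a = b
  | n + 1, a, b => ∃ c, Adj a c ∧ HasWalkLen Adj n c b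

/-- The shortest-path distance from `a` to `b` is at most `m`. -/
def DistLE {V : Type*} (Adj : V → V → Prop) (a b : V) (m : ℕ) : Prop :=
  ∃ n ≤ m, HasWalkLen Adj n a b

/-! ## The `k = 4` construction (Section 6) -/

/-- Boolean vectors of length `d`, i.e. elements of `{0,1}^d`. -/
abbrev Vec (d : ℕ) := Fin d → Bool

/-- The all-ones vector. -/
def ones (d : ℕ) : Vec d := fun _ => true

/-- Tags naming the layers of the `k = 4` construction. -/
inductive Tag4 : Type
  | L1 | L2 | L3 | L4 | L5 | L3'

/-- Potential vertices of the `k = 4` construction: a tagged partial tuple of vectors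
(position `j : Fin 4` holding the vector with 1-based index `j+1`) together with a
coordinate array `x = (x_1,x_2,x_3)`, plus the two special vertices `uu` (the vertex
`u`) and `vv` (the vertex `v`).  Vertices carrying no coordinate array in the paper are
modelled with the all-zero coordinate array. -/
inductive Vert4 (d : ℕ) : Type
  | node (t : Tag4) (p : Fin 4 → Option (Vec d)) (x : Fin 3 → Fin d) : Vert4 d
  | uu : Vert4 d
  | vv : Vert4 d

/-- The layer `L_1 = {(a_1,a_2,a_3) : a_i ∈ S_i}`. -/
def sL1 (d : ℕ) (S : Finset (Vec d)) : Set (Vert4 d) :=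
  { w | ∃ p x, w = Vert4.node Tag4.L1 p x ∧
      (∃ a ∈ S, p 0 = some a) ∧ (∃ a ∈ S, p 1 = some a) ∧ (∃ a ∈ S, p 2 = some a) ∧
      p 3 = none ∧ (∀ ℓ, (x ℓ : ℕ) = 0) }

/-- The layer `L_2 = {(a_1,a_2,x) : a_1[x_ℓ]=1 for ℓ=1,2,3 and a_2[x_ℓ]=1 for ℓ=1,2}`. -/
def sL2 (d : ℕ) (S : Finset (Vec d)) : Set (Vert4 d) :=
  { w | ∃ p x, w = Vert4.node Tag4.L2 p x ∧
      (∃ a ∈ S, p 0 = some a) ∧ (∃ a ∈ S, p 1 = some a) ∧ p 2 = none ∧ p 3 = none ∧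
      (∀ a, p 0 = some a → ∀ ℓ, a (x ℓ) = true) ∧
      (∀ a, p 1 = some a → a (x 0) = true ∧ a (x 1) = true) }

/-- The layer `L_3 = {(a_1,b_4,x) : a_1[x_ℓ]=1 and b_4[x_ℓ]=1 for ℓ=1,2,3}`. -/
def sL3 (d : ℕ) (S : Finset (Vec d)) : Set (Vert4 d) :=
  { w | ∃ p x, w = Vert4.node Tag4.L3 p x ∧
      (∃ a ∈ S, p 0 = some a) ∧ p 1 = none ∧ p 2 = none ∧ (∃ b ∈ S, p 3 = some b) ∧
      (∀ a, p 0 = some a → ∀ ℓ, a (x ℓ) = true) ∧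
      (∀ b, p 3 = some b → ∀ ℓ, b (x ℓ) = true) }

/-- The layer `L_4 = {(b_3,b_4,x) : b_3[x_ℓ]=1 for ℓ=2,3 and b_4[x_ℓ]=1 for ℓ=1,2,3}`. -/
def sL4 (d : ℕ) (S : Finset (Vec d)) : Set (Vert4 d) :=
  { w | ∃ p x, w = Vert4.node Tag4.L4 p x ∧
      p 0 = none ∧ p 1 = none ∧ (∃ b ∈ S, p 2 = some b) ∧ (∃ b ∈ S, p 3 = some b) ∧
      (∀ b, p 2 = some b → b (x 1) = true ∧ b (x 2) = true) ∧
      (∀ b, p 3 = some b → ∀ ℓ, b (x ℓ) = true) }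

/-- The layer `L_5 = {(b_2,b_3,b_4) : b_i ∈ S_i}`. -/
def sL5 (d : ℕ) (S : Finset (Vec d)) : Set (Vert4 d) :=
  { w | ∃ p x, w = Vert4.node Tag4.L5 p x ∧
      p 0 = none ∧ (∃ b ∈ S, p 1 = some b) ∧ (∃ b ∈ S, p 2 = some b) ∧
      (∃ b ∈ S, p 3 = some b) ∧ (∀ ℓ, (x ℓ : ℕ) = 0) }

/-- The layer `L'_3 = {(a_1,b_4,x)}` where at least `5` of the `6` conditions
`a_1[x_ℓ]=1` (`ℓ=1,2,3`) and `b_4[x_ℓ]=1` (`ℓ=1,2,3`) hold. -/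
def sL3' (d : ℕ) (S : Finset (Vec d)) : Set (Vert4 d) :=
  { w | ∃ p x, w = Vert4.node Tag4.L3' p x ∧
      (∃ a ∈ S, p 0 = some a) ∧ p 1 = none ∧ p 2 = none ∧ (∃ b ∈ S, p 3 = some b) ∧
      (∀ a b, p 0 = some a → p 3 = some b →
        5 ≤ (a (x 0)).toNat + (a (x 1)).toNat + (a (x 2)).toNat +
            (b (x 0)).toNat + (b (x 1)).toNat + (b (x 2)).toNat) }

/-- The vertex set of the graph `H`. -/
def VSet4 (d : ℕ) (S : Finset (Vec d)) : Set (Vert4 d) :=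
  sL1 d S ∪ sL2 d S ∪ sL3 d S ∪ sL4 d S ∪ sL5 d S ∪ sL3' d S ∪ {Vert4.uu, Vert4.vv}

/-- One orientation of the (undirected) swap edges: between `L_1` and `L_2`
(removing `a_3` at 0-based position `2`), between `L_2` and `L_3` (exchanging `a_2` at
position `1` for `b_4` at position `3`, same coordinate array), between `L_3` and `L_4`
(exchanging `a_1` at position `0` for `b_3` at position `2`, same coordinate array),
and between `L_4` and `L_5` (adding `b_2` at position `1`). -/
def swapE4 (d : ℕ) (S : Finset (Vec d)) (α β : Vert4 d) : Prop :=
  (∃ p x p' x', α = Vert4.node Tag4.L1 p x ∧ β = Vert4.node Tag4.L2 p' x' ∧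
      α ∈ sL1 d S ∧ β ∈ sL2 d S ∧ (∀ j : Fin 4, j ≠ 2 → p' j = p j)) ∨
  (∃ p x p' x', α = Vert4.node Tag4.L2 p x ∧ β = Vert4.node Tag4.L3 p' x' ∧
      α ∈ sL2 d S ∧ β ∈ sL3 d S ∧ x' = x ∧
      (∀ j : Fin 4, j ≠ 1 → j ≠ 3 → p' j = p j)) ∨
  (∃ p x p' x', α = Vert4.node Tag4.L3 p x ∧ β = Vert4.node Tag4.L4 p' x' ∧
      α ∈ sL3 d S ∧ β ∈ sL4 d S ∧ x' = x ∧
      (∀ j : Fin 4, j ≠ 0 → j ≠ 2 → p' j = p j)) ∨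
  (∃ p x p' x', α = Vert4.node Tag4.L4 p x ∧ β = Vert4.node Tag4.L5 p' x' ∧
      α ∈ sL4 d S ∧ β ∈ sL5 d S ∧ (∀ j : Fin 4, j ≠ 1 → p' j = p j))

/-- One orientation of the (undirected) vector-change edges between `L_3` and `L'_3`:
same coordinate array, and the same vectors except for at most one of `a_1` (position
`0`) or `b_4` (position `3`). -/
def vecE4 (d : ℕ) (S : Finset (Vec d)) (α β : Vert4 d) : Prop :=
  ∃ p x p' x', α = Vert4.node Tag4.L3 p x ∧ β = Vert4.node Tag4.L3' p' x' ∧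
    α ∈ sL3 d S ∧ β ∈ sL3' d S ∧ x' = x ∧
    ((∀ j : Fin 4, j ≠ 0 → p' j = p j) ∨ (∀ j : Fin 4, j ≠ 3 → p' j = p j))

/-- The coordinate-change edges: two distinct vertices with the same vector tuple,
between `L_3` and `L'_3`, within `L'_3`, within `L_2` and within `L_4`. -/
def coordE4 (d : ℕ) (S : Finset (Vec d)) (α β : Vert4 d) : Prop :=
  ∃ t t' p x x', α = Vert4.node t p x ∧ β = Vert4.node t' p x' ∧ α ≠ β ∧
    ((α ∈ sL3 d S ∧ β ∈ sL3' d S) ∨ (α ∈ sL3' d S ∧ β ∈ sL3 d S) ∨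
     (α ∈ sL3' d S ∧ β ∈ sL3' d S) ∨ (α ∈ sL2 d S ∧ β ∈ sL2 d S) ∨
     (α ∈ sL4 d S ∧ β ∈ sL4 d S))

/-- The directed fixed edges: `L_4 ∪ L_5 → u`, `u → L_3`, `L_3 → v`, and
`v → L_1 ∪ L_2`. -/
def fixedE4 (d : ℕ) (S : Finset (Vec d)) (α β : Vert4 d) : Prop :=
  ((α ∈ sL4 d S ∨ α ∈ sL5 d S) ∧ β = Vert4.uu) ∨
  (α = Vert4.uu ∧ β ∈ sL3 d S) ∨
  (α ∈ sL3 d S ∧ β = Vert4.vv) ∨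
  (α = Vert4.vv ∧ (β ∈ sL1 d S ∨ β ∈ sL2 d S))

/-- The adjacency relation of the graph `H` (undirected edges appear in both
directions). -/
def Adj4 (d : ℕ) (S : Finset (Vec d)) (α β : Vert4 d) : Prop :=
  swapE4 d S α β ∨ swapE4 d S β α ∨ vecE4 d S α β ∨ vecE4 d S β α ∨
  coordE4 d S α β ∨ fixedE4 d S α β

/-! ### Auxiliary machinery for the proof -/

section Aux

variable {V : Type*} {A : V → V → Prop}

lemma hasWalkLen_trans {n m : ℕ} {a b c : V} (h1 : HasWalkLen A n a b)
    (h2 : HasWalkLen A m b c) : HasWalkLen A (m + n) a c := by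
  induction n generalizing a with
  | zero => cases h1; exact h2
  | succ n ih =>
    obtain ⟨w, hw, h1⟩ := h1
    exact ⟨w, hw, ih h1⟩

lemma DistLE.trans {a b c : V} {m m' : ℕ} (h1 : DistLE A a b m) (h2 : DistLE A b c m') :
    DistLE A a c (m + m') := by
  obtain ⟨n, hn, h1⟩ := h1
  obtain ⟨n', hn', h2⟩ := h2
  exact ⟨n' + n, by omega, hasWalkLen_trans h1 h2⟩

lemma DistLE.mono {a b : V} {m m' : ℕ} (h : DistLE A a b m) (hm : m ≤ m') :
    DistLE A a b m' := by
  obtain ⟨n, hn, h⟩ := h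
  exact ⟨n, le_trans hn hm, h⟩

lemma DistLE.of_adj {a b : V} (h : A a b) : DistLE A a b 1 :=
  ⟨1, le_rfl, b, h, rfl⟩

lemma distLE_two {a b c : V} (h1 : A a b) (h2 : A b c) : DistLE A a c 2 :=
  ⟨2, le_rfl, b, h1, c, h2, rfl⟩

end Aux

section Constr

variable {d : ℕ} {S : Finset (Vec d)}

/-- A quadruple as a function on `Fin 4`. -/
def pq {A : Type*} (o0 o1 o2 o3 : A) : Fin 4 → A
  | 0 => o0 | 1 => o1 | 2 => o2 | 3 => o3

lemma hno4 (hno : ∀ f : Fin 4 → Vec d, (∀ j, f j ∈ S) → ∃ x : Fin d, ∀ j, f j x = true)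
    (v1 v2 v3 v4 : Vec d) (h1 : v1 ∈ S) (h2 : v2 ∈ S) (h3 : v3 ∈ S) (h4 : v4 ∈ S) :
    ∃ x : Fin d, v1 x = true ∧ v2 x = true ∧ v3 x = true ∧ v4 x = true := by
  obtain ⟨x, hx⟩ := hno (pq v1 v2 v3 v4) (by intro j; fin_cases j <;> assumption)
  exact ⟨x, hx 0, hx 1, hx 2, hx 3⟩

/-- Constant coordinate array. -/
def cst (d : ℕ) (y : Fin d) : Fin 3 → Fin d := fun _ => y

def mkL2 (a b : Vec d) (y : Fin d) : Vert4 d :=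
  Vert4.node Tag4.L2 (pq (some a) (some b) none none) (cst d y)
def mkL3 (a b : Vec d) (y : Fin d) : Vert4 d :=
  Vert4.node Tag4.L3 (pq (some a) none none (some b)) (cst d y)
def mkL3' (a b : Vec d) (y : Fin d) : Vert4 d :=
  Vert4.node Tag4.L3' (pq (some a) none none (some b)) (cst d y)
def mkL4 (a b : Vec d) (y : Fin d) : Vert4 d :=
  Vert4.node Tag4.L4 (pq none none (some a) (some b)) (cst d y)

lemma mkL2_mem {a b : Vec d} {y : Fin d} (ha : a ∈ S) (hb : b ∈ S)
    (h1 : a y = true) (h2 : b y = true) : mkL2 a b y ∈ sL2 d S := by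
  refine ⟨_, _, rfl, ⟨a, ha, rfl⟩, ⟨b, hb, rfl⟩, rfl, rfl, ?_, ?_⟩
  · intro a' h ℓ; injection h with h; subst h; exact h1
  · intro a' h; injection h with h; subst h; exact ⟨h2, h2⟩

lemma mkL3_mem {a b : Vec d} {y : Fin d} (ha : a ∈ S) (hb : b ∈ S)
    (h1 : a y = true) (h2 : b y = true) : mkL3 a b y ∈ sL3 d S := by
  refine ⟨_, _, rfl, ⟨a, ha, rfl⟩, rfl, rfl, ⟨b, hb, rfl⟩, ?_, ?_⟩
  · intro a' h ℓ; injection h with h; subst h; exact h1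
  · intro a' h ℓ; injection h with h; subst h; exact h2

lemma mkL3'_mem {a b : Vec d} {y : Fin d} (ha : a ∈ S) (hb : b ∈ S)
    (h1 : a y = true) (h2 : b y = true) : mkL3' a b y ∈ sL3' d S := by
  refine ⟨_, _, rfl, ⟨a, ha, rfl⟩, rfl, rfl, ⟨b, hb, rfl⟩, ?_⟩
  intro a' b' ha' hb'
  injection ha' with ha'; subst ha'
  injection hb' with hb'; subst hb'
  show 5 ≤ (a y).toNat + (a y).toNat + (a y).toNat + (b y).toNat + (b y).toNat + (b y).toNat
  rw [h1, h2]; norm_num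

lemma mkL4_mem {a b : Vec d} {y : Fin d} (ha : a ∈ S) (hb : b ∈ S)
    (h1 : a y = true) (h2 : b y = true) : mkL4 a b y ∈ sL4 d S := by
  refine ⟨_, _, rfl, rfl, rfl, ⟨a, ha, rfl⟩, ⟨b, hb, rfl⟩, ?_, ?_⟩
  · intro b' h; injection h with h; subst h; exact ⟨h1, h1⟩
  · intro b' h ℓ; injection h with h; subst h; exact h2

lemma node_ne {t t' : Tag4} {p p' : Fin 4 → Option (Vec d)} {x x' : Fin 3 → Fin d}
    (h : t ≠ t') : (Vert4.node t p x : Vert4 d) ≠ Vert4.node t' p' x' := by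
  intro hc; injection hc with h1 _ _; exact h h1

/-- Swap edge from `mkL2 a b y` to `mkL3 a e y`. -/
lemma adj_mkL2_mkL3 {a b e : Vec d} {y : Fin d} (hm1 : mkL2 a b y ∈ sL2 d S)
    (hm2 : mkL3 a e y ∈ sL3 d S) : Adj4 d S (mkL2 a b y) (mkL3 a e y) := by
  refine Or.inl (Or.inr (Or.inl ⟨_, _, _, _, rfl, rfl, hm1, hm2, rfl, ?_⟩))
  intro j h1 h2; fin_cases j <;> first | rfl | simp_all

/-- Swap edge from `mkL3 c e y` to `mkL4 w e y`. -/
lemma adj_mkL3_mkL4 {c e w : Vec d} {y : Fin d} (hm1 : mkL3 c e y ∈ sL3 d S)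
    (hm2 : mkL4 w e y ∈ sL4 d S) : Adj4 d S (mkL3 c e y) (mkL4 w e y) := by
  refine Or.inl (Or.inr (Or.inr (Or.inl ⟨_, _, _, _, rfl, rfl, hm1, hm2, rfl, ?_⟩)))
  intro j h1 h2; fin_cases j <;> first | rfl | simp_all

/-- Vector-change edge (position 0). -/
lemma vec_pos0 {c a b : Vec d} {y : Fin d} (hm1 : mkL3 c b y ∈ sL3 d S)
    (hm2 : mkL3' a b y ∈ sL3' d S) : vecE4 d S (mkL3 c b y) (mkL3' a b y) := by
  refine ⟨_, _, _, _, rfl, rfl, hm1, hm2, rfl, Or.inl ?_⟩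
  intro j h; fin_cases j <;> first | rfl | simp_all

/-- Vector-change edge (position 3). -/
lemma vec_pos3 {a e b : Vec d} {y : Fin d} (hm1 : mkL3 a e y ∈ sL3 d S)
    (hm2 : mkL3' a b y ∈ sL3' d S) : vecE4 d S (mkL3 a e y) (mkL3' a b y) := by
  refine ⟨_, _, _, _, rfl, rfl, hm1, hm2, rfl, Or.inr ?_⟩
  intro j h; fin_cases j <;> first | rfl | simp_all

lemma adj_to_u {α : Vert4 d} (h : α ∈ sL4 d S ∨ α ∈ sL5 d S) : Adj4 d S α Vert4.uu :=
  Or.inr (Or.inr (Or.inr (Or.inr (Or.inr (Or.inl ⟨h, rfl⟩)))))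

lemma adj_u_L3 {β : Vert4 d} (h : β ∈ sL3 d S) : Adj4 d S Vert4.uu β :=
  Or.inr (Or.inr (Or.inr (Or.inr (Or.inr (Or.inr (Or.inl ⟨rfl, h⟩))))))

lemma adj_L3_v {α : Vert4 d} (h : α ∈ sL3 d S) : Adj4 d S α Vert4.vv :=
  Or.inr (Or.inr (Or.inr (Or.inr (Or.inr (Or.inr (Or.inr (Or.inl ⟨h, rfl⟩)))))))

lemma adj_v_L12 {β : Vert4 d} (h : β ∈ sL1 d S ∨ β ∈ sL2 d S) : Adj4 d S Vert4.vv β :=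
  Or.inr (Or.inr (Or.inr (Or.inr (Or.inr (Or.inr (Or.inr (Or.inr ⟨rfl, h⟩)))))))

end Constr

section Main

variable {d : ℕ} {S : Finset (Vec d)}

/-- From any vertex of `H` one can reach a canonical `L_3` vertex in at most two
steps, for every common coordinate `y` of the two relevant vectors. -/
lemma prefix_lemma (hone : ones d ∈ S) {α : Vert4 d} (hα : α ∈ VSet4 d S) :
    ∃ c1 c2, c1 ∈ S ∧ c2 ∈ S ∧ ∀ e y, e ∈ S → c1 y = true → c2 y = true → e y = true →
      DistLE (Adj4 d S) α (mkL3 c1 e y) 2 := by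
  simp only [VSet4, Set.mem_union, Set.mem_insert_iff, Set.mem_singleton_iff] at hα
  rcases hα with ((((((h | h) | h) | h) | h) | h) | h | h)
  · -- α ∈ L1
    have hm := h
    obtain ⟨p, x, rfl, ⟨a1, ha1, hp0⟩, ⟨a2, ha2, hp1⟩, ⟨a3, ha3, hp2⟩, hp3, hx⟩ := h
    refine ⟨a1, a2, ha1, ha2, fun e y he h1 h2 h3 => ?_⟩
    have m2 : mkL2 a1 a2 y ∈ sL2 d S := mkL2_mem ha1 ha2 h1 h2
    have m3 : mkL3 a1 e y ∈ sL3 d S := mkL3_mem ha1 he h1 h3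
    refine distLE_two ?_ (adj_mkL2_mkL3 m2 m3)
    refine Or.inl (Or.inl ⟨p, x, _, _, rfl, rfl, hm, m2, ?_⟩)
    intro j hj; fin_cases j
    · exact hp0.symm
    · exact hp1.symm
    · simp at hj
    · exact hp3.symm
  · -- α ∈ L2
    have hm := h
    obtain ⟨p, x, rfl, ⟨a1, ha1, hp0⟩, ⟨a2, ha2, hp1⟩, hp2, hp3, hf0, hf1⟩ := h
    have hpq : p = pq (some a1) (some a2) none none := by
      funext j; fin_cases j; exacts [hp0, hp1, hp2, hp3]
    subst hpq
    refine ⟨a1, a2, ha1, ha2, fun e y he h1 h2 h3 => ?_⟩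
    have m2 : mkL2 a1 a2 y ∈ sL2 d S := mkL2_mem ha1 ha2 h1 h2
    have m3 : mkL3 a1 e y ∈ sL3 d S := mkL3_mem ha1 he h1 h3
    by_cases hq : Vert4.node Tag4.L2 (pq (some a1) (some a2) none none) x = mkL2 a1 a2 y
    · rw [hq]
      exact (DistLE.of_adj (adj_mkL2_mkL3 m2 m3)).mono (by omega)
    · refine distLE_two ?_ (adj_mkL2_mkL3 m2 m3)
      exact Or.inr (Or.inr (Or.inr (Or.inr (Or.inl
        ⟨_, _, _, _, _, rfl, rfl, hq, Or.inr (Or.inr (Or.inr (Or.inl ⟨hm, m2⟩)))⟩))))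
  · -- α ∈ L3
    have hm := h
    obtain ⟨p, x, rfl, ⟨a1, ha1, hp0⟩, hp1, hp2, ⟨b4, hb4, hp3⟩, hf0, hf3⟩ := h
    have hpq : p = pq (some a1) none none (some b4) := by
      funext j; fin_cases j; exacts [hp0, hp1, hp2, hp3]
    subst hpq
    refine ⟨a1, b4, ha1, hb4, fun e y he h1 h2 h3 => ?_⟩
    have m3' : mkL3' a1 b4 y ∈ sL3' d S := mkL3'_mem ha1 hb4 h1 h2
    have m3 : mkL3 a1 e y ∈ sL3 d S := mkL3_mem ha1 he h1 h3
    refine distLE_two (b := mkL3' a1 b4 y) ?_ ?_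
    · exact Or.inr (Or.inr (Or.inr (Or.inr (Or.inl
        ⟨_, _, _, _, _, rfl, rfl, node_ne (fun hc => Tag4.noConfusion hc),
          Or.inl ⟨hm, m3'⟩⟩))))
    · exact Or.inr (Or.inr (Or.inr (Or.inl (vec_pos3 m3 m3'))))
  · -- α ∈ L4
    have hm := h
    refine ⟨ones d, ones d, hone, hone, fun e y he h1 h2 h3 => ?_⟩
    have m3 : mkL3 (ones d) e y ∈ sL3 d S := mkL3_mem hone he rfl h3
    exact distLE_two (adj_to_u (Or.inl hm)) (adj_u_L3 m3)
  · -- α ∈ L5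
    have hm := h
    refine ⟨ones d, ones d, hone, hone, fun e y he h1 h2 h3 => ?_⟩
    have m3 : mkL3 (ones d) e y ∈ sL3 d S := mkL3_mem hone he rfl h3
    exact distLE_two (adj_to_u (Or.inr hm)) (adj_u_L3 m3)
  · -- α ∈ L3'
    have hm := h
    obtain ⟨p, x, rfl, ⟨a1, ha1, hp0⟩, hp1, hp2, ⟨b4, hb4, hp3⟩, h5⟩ := h
    have hpq : p = pq (some a1) none none (some b4) := by
      funext j; fin_cases j; exacts [hp0, hp1, hp2, hp3]
    subst hpq
    refine ⟨a1, b4, ha1, hb4, fun e y he h1 h2 h3 => ?_⟩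
    have m3' : mkL3' a1 b4 y ∈ sL3' d S := mkL3'_mem ha1 hb4 h1 h2
    have m3 : mkL3 a1 e y ∈ sL3 d S := mkL3_mem ha1 he h1 h3
    have step2 : Adj4 d S (mkL3' a1 b4 y) (mkL3 a1 e y) :=
      Or.inr (Or.inr (Or.inr (Or.inl (vec_pos3 m3 m3'))))
    by_cases hq : Vert4.node Tag4.L3' (pq (some a1) none none (some b4)) x = mkL3' a1 b4 y
    · rw [hq]
      exact (DistLE.of_adj step2).mono (by omega)
    · refine distLE_two ?_ step2
      exact Or.inr (Or.inr (Or.inr (Or.inr (Or.inl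
        ⟨_, _, _, _, _, rfl, rfl, hq, Or.inr (Or.inr (Or.inl ⟨hm, m3'⟩))⟩))))
  · -- α = u
    subst h
    refine ⟨ones d, ones d, hone, hone, fun e y he h1 h2 h3 => ?_⟩
    have m3 : mkL3 (ones d) e y ∈ sL3 d S := mkL3_mem hone he rfl h3
    exact (DistLE.of_adj (adj_u_L3 m3)).mono (by omega)
  · -- α = v
    subst h
    refine ⟨ones d, ones d, hone, hone, fun e y he h1 h2 h3 => ?_⟩
    have m2 : mkL2 (ones d) (ones d) y ∈ sL2 d S := mkL2_mem hone hone rfl rfl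
    have m3 : mkL3 (ones d) e y ∈ sL3 d S := mkL3_mem hone he rfl h3
    exact distLE_two (adj_v_L12 (Or.inr m2)) (adj_mkL2_mkL3 m2 m3)

/-- Any vertex of `H` can be reached from a suitable canonical `L_3` vertex in at most
two steps, for every common coordinate `y` of the relevant vectors. -/
lemma suffix_lemma (hone : ones d ∈ S) {β : Vert4 d} (hβ : β ∈ VSet4 d S) :
    ∃ w1 w2, w1 ∈ S ∧ w2 ∈ S ∧ ∀ c y, c ∈ S → c y = true → w1 y = true → w2 y = true →
      DistLE (Adj4 d S) (mkL3 c w2 y) β 2 := by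
  simp only [VSet4, Set.mem_union, Set.mem_insert_iff, Set.mem_singleton_iff] at hβ
  rcases hβ with ((((((h | h) | h) | h) | h) | h) | h | h)
  · -- β ∈ L1
    refine ⟨ones d, ones d, hone, hone, fun c y hc h1 h2 h3 => ?_⟩
    have m3 : mkL3 c (ones d) y ∈ sL3 d S := mkL3_mem hc hone h1 rfl
    exact distLE_two (adj_L3_v m3) (adj_v_L12 (Or.inl h))
  · -- β ∈ L2
    refine ⟨ones d, ones d, hone, hone, fun c y hc h1 h2 h3 => ?_⟩
    have m3 : mkL3 c (ones d) y ∈ sL3 d S := mkL3_mem hc hone h1 rfl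
    exact distLE_two (adj_L3_v m3) (adj_v_L12 (Or.inr h))
  · -- β ∈ L3
    have hm := h
    obtain ⟨p, x, rfl, ⟨w1, hw1, hp0⟩, hp1, hp2, ⟨w2, hw2, hp3⟩, hf0, hf3⟩ := h
    have hpq : p = pq (some w1) none none (some w2) := by
      funext j; fin_cases j; exacts [hp0, hp1, hp2, hp3]
    subst hpq
    refine ⟨w1, w2, hw1, hw2, fun c y hc h1 h2 h3 => ?_⟩
    have m3 : mkL3 c w2 y ∈ sL3 d S := mkL3_mem hc hw2 h1 h3
    have m3' : mkL3' w1 w2 y ∈ sL3' d S := mkL3'_mem hw1 hw2 h2 h3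
    refine distLE_two (Or.inr (Or.inr (Or.inl (vec_pos0 m3 m3')))) ?_
    exact Or.inr (Or.inr (Or.inr (Or.inr (Or.inl
      ⟨_, _, _, _, _, rfl, rfl, node_ne (fun hc => Tag4.noConfusion hc),
        Or.inr (Or.inl ⟨m3', hm⟩)⟩))))
  · -- β ∈ L4
    have hm := h
    obtain ⟨p, x, rfl, hp0, hp1, ⟨w1, hw1, hp2⟩, ⟨w2, hw2, hp3⟩, hf2, hf3⟩ := h
    have hpq : p = pq none none (some w1) (some w2) := by
      funext j; fin_cases j; exacts [hp0, hp1, hp2, hp3]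
    subst hpq
    refine ⟨w1, w2, hw1, hw2, fun c y hc h1 h2 h3 => ?_⟩
    have m3 : mkL3 c w2 y ∈ sL3 d S := mkL3_mem hc hw2 h1 h3
    have m4 : mkL4 w1 w2 y ∈ sL4 d S := mkL4_mem hw1 hw2 h2 h3
    by_cases hq : mkL4 w1 w2 y = Vert4.node Tag4.L4 (pq none none (some w1) (some w2)) x
    · rw [← hq]
      exact (DistLE.of_adj (adj_mkL3_mkL4 m3 m4)).mono (by omega)
    · refine distLE_two (adj_mkL3_mkL4 m3 m4) ?_
      exact Or.inr (Or.inr (Or.inr (Or.inr (Or.inl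
        ⟨_, _, _, _, _, rfl, rfl, hq,
          Or.inr (Or.inr (Or.inr (Or.inr ⟨m4, hm⟩)))⟩))))
  · -- β ∈ L5
    have hm := h
    obtain ⟨p, x, rfl, hp0, ⟨b2, hb2, hp1⟩, ⟨w1, hw1, hp2⟩, ⟨w2, hw2, hp3⟩, hx⟩ := h
    have hpq : p = pq none (some b2) (some w1) (some w2) := by
      funext j; fin_cases j; exacts [hp0, hp1, hp2, hp3]
    subst hpq
    refine ⟨w1, w2, hw1, hw2, fun c y hc h1 h2 h3 => ?_⟩
    have m3 : mkL3 c w2 y ∈ sL3 d S := mkL3_mem hc hw2 h1 h3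
    have m4 : mkL4 w1 w2 y ∈ sL4 d S := mkL4_mem hw1 hw2 h2 h3
    refine distLE_two (adj_mkL3_mkL4 m3 m4) ?_
    refine Or.inl (Or.inr (Or.inr (Or.inr ⟨_, _, _, _, rfl, rfl, m4, hm, ?_⟩)))
    intro j hj; fin_cases j <;> first | rfl | simp_all
  · -- β ∈ L3'
    have hm := h
    obtain ⟨p, x, rfl, ⟨w1, hw1, hp0⟩, hp1, hp2, ⟨w2, hw2, hp3⟩, h5⟩ := h
    have hpq : p = pq (some w1) none none (some w2) := by
      funext j; fin_cases j; exacts [hp0, hp1, hp2, hp3]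
    subst hpq
    refine ⟨w1, w2, hw1, hw2, fun c y hc h1 h2 h3 => ?_⟩
    have m3 : mkL3 c w2 y ∈ sL3 d S := mkL3_mem hc hw2 h1 h3
    have m3' : mkL3' w1 w2 y ∈ sL3' d S := mkL3'_mem hw1 hw2 h2 h3
    have step1 : Adj4 d S (mkL3 c w2 y) (mkL3' w1 w2 y) :=
      Or.inr (Or.inr (Or.inl (vec_pos0 m3 m3')))
    by_cases hq : mkL3' w1 w2 y = Vert4.node Tag4.L3' (pq (some w1) none none (some w2)) x
    · rw [← hq]
      exact (DistLE.of_adj step1).mono (by omega)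
    · refine distLE_two step1 ?_
      exact Or.inr (Or.inr (Or.inr (Or.inr (Or.inl
        ⟨_, _, _, _, _, rfl, rfl, hq, Or.inr (Or.inr (Or.inl ⟨m3', hm⟩))⟩))))
  · -- β = u
    subst h
    refine ⟨ones d, ones d, hone, hone, fun c y hc h1 h2 h3 => ?_⟩
    have m3 : mkL3 c (ones d) y ∈ sL3 d S := mkL3_mem hc hone h1 rfl
    have m4 : mkL4 (ones d) (ones d) y ∈ sL4 d S := mkL4_mem hone hone rfl rfl
    exact distLE_two (adj_mkL3_mkL4 m3 m4) (adj_to_u (Or.inl m4))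
  · -- β = v
    subst h
    refine ⟨ones d, ones d, hone, hone, fun c y hc h1 h2 h3 => ?_⟩
    have m3 : mkL3 c (ones d) y ∈ sL3 d S := mkL3_mem hc hone h1 rfl
    exact (DistLE.of_adj (adj_L3_v m3)).mono (by omega)

end Main

/-- **`k = 4`, NO case.**  Assume every four vectors
`v_1, v_2, v_3, v_4 ∈ S` (repetitions allowed) have a common coordinate `x ∈ [d]` with
`v_1[x] = v_2[x] = v_3[x] = v_4[x] = 1`.  Then the diameter of the graph `H` is at most
`4`: `d(α,β) ≤ 4` for every ordered pair of vertices `α, β` of `H`. -/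
theorem k4_no_instance_diameter (d : ℕ) (hd : 1 ≤ d)
    (S : Finset (Vec d)) (hone : ones d ∈ S)
    (hno : ∀ f : Fin 4 → Vec d, (∀ j, f j ∈ S) → ∃ x : Fin d, ∀ j, f j x = true)
    (α : Vert4 d) (hα : α ∈ VSet4 d S)
    (β : Vert4 d) (hβ : β ∈ VSet4 d S) :
    DistLE (Adj4 d S) α β 4 := by
  obtain ⟨c1, c2, hc1, hc2, hpre⟩ := prefix_lemma hone hα
  obtain ⟨w1, w2, hw1, hw2, hsuf⟩ := suffix_lemma hone hβ
  obtain ⟨y, hy1, hy2, hy3, hy4⟩ := hno4 hno c1 c2 w1 w2 hc1 hc2 hw1 hw2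
  exact (hpre w2 y hw2 hy1 hy2 hy4).trans (hsuf c1 y hc1 hy1 hy3 hy4)

end DiamK4
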